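/- arXiv:1906.01918 — 4 statements merged into one kernel-verified Lean document; each statement's English description precedes it below -/
import Mathlib

section
/- Let φ be an ℍ-linear operator on a finite-dimensional right ℍ-vector space V and let φ₀ be the induced ℂ-linear operator on V₀ (V with scalars restricted to ℂ). Then φ is diagonalizable over ℍ if and only if φ₀ is diagonalizable over ℂ. -/
open scoped Quaternion
open MulOpposite

noncomputable def toQop : ℂ →+* (ℍ[ℝ])ᵐᵒᵖ :=
  RingHom.toOpposite Quaternion.ofComplex.toRingHom
    (fun x y => by
      change Commute (Quaternion.ofComplex x) (Quaternion.ofComplex y)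
      rw [Commute, SemiconjBy, ← map_mul, ← map_mul, mul_comm])

noncomputable instance restrictC (V : Type*) [AddCommGroup V] [Module (ℍ[ℝ])ᵐᵒᵖ V] :
    Module ℂ V :=
  Module.compHom V toQop

lemma smulC_def {V : Type*} [AddCommGroup V] [Module (ℍ[ℝ])ᵐᵒᵖ V] (c : ℂ) (x : V) :
    c • x = op (Quaternion.ofComplex c) • x := rfl

noncomputable def jq : ℍ[ℝ] := ⟨0,0,1,0⟩

lemma decomp (p : ℍ[ℝ]) :
    p = Quaternion.ofComplex ⟨p.re, p.imI⟩ + jq * Quaternion.ofComplex ⟨p.imJ, -p.imK⟩ := by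
  ext <;> simp only [Quaternion.re_add, Quaternion.imI_add, Quaternion.imJ_add, Quaternion.imK_add, Quaternion.re_mul, Quaternion.imI_mul, Quaternion.imJ_mul, Quaternion.imK_mul] <;> simp [jq, Quaternion.re_mul, Quaternion.imI_mul, Quaternion.imJ_mul, Quaternion.imK_mul]

lemma pair_zero {a b : ℂ} (h : Quaternion.ofComplex a + jq * Quaternion.ofComplex b = 0) :
    a = 0 ∧ b = 0 := by
  have h1 := congrArg QuaternionAlgebra.re h
  have h2 := congrArg QuaternionAlgebra.imI h
  have h3 := congrArg QuaternionAlgebra.imJ h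
  have h4 := congrArg QuaternionAlgebra.imK h
  simp only [Quaternion.re_add, Quaternion.imI_add, Quaternion.imJ_add, Quaternion.imK_add, Quaternion.re_mul, Quaternion.imI_mul, Quaternion.imJ_mul, Quaternion.imK_mul] at h1 h2 h3 h4
  simp [jq, Quaternion.re_mul, Quaternion.imI_mul, Quaternion.imJ_mul, Quaternion.imK_mul] at h1 h2 h3 h4
  exact ⟨Complex.ext h1 h2, Complex.ext h3 h4⟩

lemma mul_jq (μ : ℂ) :
    Quaternion.ofComplex μ * jq = jq * Quaternion.ofComplex (starRingEnd ℂ μ) := by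
  ext <;> simp only [Quaternion.re_add, Quaternion.imI_add, Quaternion.imJ_add, Quaternion.imK_add, Quaternion.re_mul, Quaternion.imI_mul, Quaternion.imJ_mul, Quaternion.imK_mul] <;> simp [jq, Quaternion.re_mul, Quaternion.imI_mul, Quaternion.imJ_mul, Quaternion.imK_mul]

lemma conj_complex (l : ℍ[ℝ]) :
    ∃ q : ℍ[ℝ], q ≠ 0 ∧ ∃ μ : ℂ, l * q = q * Quaternion.ofComplex μ := by
  by_cases h : l.imJ = 0 ∧ l.imK = 0
  · refine ⟨1, one_ne_zero, ⟨l.re, l.imI⟩, ?_⟩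
    ext <;> simp [h.1, h.2]
  · set s := Real.sqrt (l.imI^2 + l.imJ^2 + l.imK^2) with hs
    have hs2 : s^2 = l.imI^2 + l.imJ^2 + l.imK^2 := Real.sq_sqrt (by positivity)
    refine ⟨⟨0, l.imI + s, l.imJ, l.imK⟩, ?_, ⟨l.re, s⟩, ?_⟩
    · intro hq
      rcases not_and_or.mp h with h' | h'
      · exact h' (by simpa using congrArg QuaternionAlgebra.imJ hq)
      · exact h' (by simpa using congrArg QuaternionAlgebra.imK hq)
    · set q : ℍ[ℝ] := ⟨0, l.imI + s, l.imJ, l.imK⟩ with hq; ext <;> simp only [Quaternion.re_add, Quaternion.imI_add, Quaternion.imJ_add, Quaternion.imK_add, Quaternion.re_mul, Quaternion.imI_mul, Quaternion.imJ_mul, Quaternion.imK_mul] <;> simp [hq] <;> nlinarith [hs2]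

section Main

variable {V : Type*} [AddCommGroup V] [Module (ℍ[ℝ])ᵐᵒᵖ V]

lemma spanC_le_spanH (s : Set V) (x : V) (hx : x ∈ Submodule.span ℂ s) :
    x ∈ Submodule.span (ℍ[ℝ])ᵐᵒᵖ s := by
  refine Submodule.span_induction (fun y hy => Submodule.subset_span hy)
    (Submodule.zero_mem _) (fun y z _ _ hy hz => Submodule.add_mem _ hy hz)
    (fun c y _ hy => ?_) hx
  rw [smulC_def]
  exact Submodule.smul_mem _ _ hy

end Main

/-- an ℍ-linear operator `φ` on a finite-dimensional right ℍ-vector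
space `V` is diagonalizable over ℍ (there is an ℍ-basis of eigenvectors) iff the
induced ℂ-linear operator `φ₀` on `V₀` is diagonalizable over ℂ. -/
theorem diagonalizable_iff (V : Type*) [AddCommGroup V] [Module (ℍ[ℝ])ᵐᵒᵖ V]
    [FiniteDimensional (ℍ[ℝ])ᵐᵒᵖ V] (φ : V →ₗ[(ℍ[ℝ])ᵐᵒᵖ] V) :
    (∃ (m : ℕ) (v : Fin m → V),
        LinearIndependent (ℍ[ℝ])ᵐᵒᵖ v ∧
        Submodule.span (ℍ[ℝ])ᵐᵒᵖ (Set.range v) = ⊤ ∧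
        ∀ i, ∃ lam : ℍ[ℝ], φ (v i) = op lam • v i) ↔
      (∃ (m : ℕ) (w : Fin m → V),
        LinearIndependent ℂ w ∧
        Submodule.span ℂ (Set.range w) = ⊤ ∧
        ∀ i, ∃ μ : ℂ, φ (w i) = μ • w i) := by
  constructor
  · rintro ⟨m, v, hli, hsp, heig⟩
    choose lam hlam using heig
    choose q hq μ hμ using fun i => conj_complex (lam i)
    let Z : ℂ → ℍ[ℝ] := fun c => Quaternion.ofComplex c
    set u : Fin m ⊕ Fin m → V :=
      Sum.elim (fun i => op (q i) • v i) (fun i => op jq • (op (q i) • v i)) with hu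
    -- eigenvector properties
    have key1 : ∀ i, φ (u (.inl i)) = μ i • u (.inl i) := by
      intro i
      simp only [hu, Sum.elim_inl, map_smul, hlam, smulC_def, ← mul_smul, ← op_mul]
      rw [hμ i]
    have key2 : ∀ i, φ (u (.inr i)) = (starRingEnd ℂ (μ i)) • u (.inr i) := by
      intro i
      have h1 := key1 i
      simp only [hu, Sum.elim_inl, Sum.elim_inr] at h1 ⊢
      rw [map_smul, h1]
      simp only [smulC_def, ← mul_smul, ← op_mul]
      congr 1
      rw [MulOpposite.op_inj]
      rw [mul_assoc (q i) (Quaternion.ofComplex (μ i)) jq, mul_jq, ← mul_assoc]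
    -- combination lemma
    have comb : ∀ (a b : ℂ) (i : Fin m),
        a • u (.inl i) + b • u (.inr i) = op (q i * (Z a + jq * Z b)) • v i := by
      intro a b i
      simp only [hu, Sum.elim_inl, Sum.elim_inr, smulC_def, ← mul_smul, ← op_mul, ← op_add,
        ← add_smul]
      congr 1
      rw [mul_add, ← mul_assoc]
    -- linear independence
    have hliu : LinearIndependent ℂ u := by
      rw [Fintype.linearIndependent_iff]
      intro g hg
      have hsum : ∑ i : Fin m,
          (op (q i * (Z (g (.inl i)) + jq * Z (g (.inr i)))) : (ℍ[ℝ])ᵐᵒᵖ) • v i = 0 := by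
        rw [← hg, Fintype.sum_sum_type, ← Finset.sum_add_distrib]
        exact Finset.sum_congr rfl fun i _ => (comb _ _ i).symm
      have hz := Fintype.linearIndependent_iff.mp hli _ hsum
      intro k
      obtain i | i := k
      · have := hz i
        rw [op_eq_zero_iff, mul_eq_zero] at this
        exact (pair_zero ((this.resolve_left (hq i)))).1
      · have := hz i
        rw [op_eq_zero_iff, mul_eq_zero] at this
        exact (pair_zero ((this.resolve_left (hq i)))).2
    -- span
    have hclaim : ∀ (i : Fin m) (t : ℍ[ℝ]),
        op t • v i ∈ Submodule.span ℂ (Set.range u) := by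
      intro i t
      have hvt : op t • v i = op ((q i)⁻¹ * t) • u (.inl i) := by
        simp only [hu, Sum.elim_inl, ← mul_smul, ← op_mul, ← mul_assoc,
          mul_inv_cancel₀ (hq i), one_mul]
      rw [hvt, decomp ((q i)⁻¹ * t)]
      set p := (q i)⁻¹ * t
      rw [op_add, add_smul]
      refine Submodule.add_mem _ ?_ ?_
      · rw [← smulC_def]
        exact Submodule.smul_mem _ _ (Submodule.subset_span ⟨.inl i, rfl⟩)
      · have : (op (jq * Quaternion.ofComplex ⟨p.imJ, -p.imK⟩) : (ℍ[ℝ])ᵐᵒᵖ) • u (.inl i)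
            = (⟨p.imJ, -p.imK⟩ : ℂ) • u (.inr i) := by
          simp only [hu, Sum.elim_inl, Sum.elim_inr, smulC_def, ← mul_smul, ← op_mul, mul_assoc]
        rw [this]
        exact Submodule.smul_mem _ _ (Submodule.subset_span ⟨.inr i, rfl⟩)
    have hspu : Submodule.span ℂ (Set.range u) = ⊤ := by
      rw [eq_top_iff]
      intro x _
      have hx : x ∈ Submodule.span (ℍ[ℝ])ᵐᵒᵖ (Set.range v) := by rw [hsp]; trivial
      have hmot : ∀ t : ℍ[ℝ], op t • x ∈ Submodule.span ℂ (Set.range u) := by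
        refine Submodule.span_induction (p := fun y _ => ∀ t : ℍ[ℝ],
            op t • y ∈ Submodule.span ℂ (Set.range u)) ?_ ?_ ?_ ?_ hx
        · rintro y ⟨i, rfl⟩ t; exact hclaim i t
        · intro t; rw [smul_zero]; exact Submodule.zero_mem _
        · intro y z _ _ hy hz t; rw [smul_add]; exact Submodule.add_mem _ (hy t) (hz t)
        · intro a y _ hy t
          rw [← mul_smul, ← op_unop a, ← op_mul]
          exact hy _
      have := hmot 1
      rwa [op_one, one_smul] at this
    -- reindex
    refine ⟨m + m, u ∘ finSumFinEquiv.symm, hliu.comp _ finSumFinEquiv.symm.injective, ?_, ?_⟩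
    · rw [finSumFinEquiv.symm.surjective.range_comp]
      exact hspu
    · intro k
      rcases h : finSumFinEquiv.symm k with i | i
      · exact ⟨μ i, by simp only [Function.comp_apply, h]; exact key1 i⟩
      · exact ⟨starRingEnd ℂ (μ i), by simp only [Function.comp_apply, h]; exact key2 i⟩
  · rintro ⟨m, w, hli, hsp, heig⟩
    have hsp' : Submodule.span (ℍ[ℝ])ᵐᵒᵖ (Set.range w) = ⊤ := by
      rw [eq_top_iff]
      intro x _
      exact spanC_le_spanH _ x (by rw [hsp]; trivial)
    obtain ⟨b, hbsub, hbspan, hbli⟩ := exists_linearIndependent (ℍ[ℝ])ᵐᵒᵖ (Set.range w)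
    haveI := hbli.setFinite.fintype
    refine ⟨Fintype.card b, fun k => ((Fintype.equivFin b).symm k : V),
      hbli.comp _ (Fintype.equivFin b).symm.injective, ?_, ?_⟩
    · have : Set.range (fun k => ((Fintype.equivFin b).symm k : V)) = b := by
        rw [show (fun k => ((Fintype.equivFin b).symm k : V))
            = Subtype.val ∘ (Fintype.equivFin b).symm from rfl,
          (Fintype.equivFin b).symm.surjective.range_comp, Subtype.range_coe]
      rw [this, hbspan, hsp']
    · intro k
      obtain ⟨i, hi⟩ := hbsub ((Fintype.equivFin b).symm k).2
      obtain ⟨μ, hμ⟩ := heig i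
      refine ⟨Quaternion.ofComplex μ, ?_⟩
      show φ ((((Fintype.equivFin b).symm k) : b) : V) = _
      rw [← hi, hμ, smulC_def, hi]
end

section
/- If φ₀ is a ℂ-linear operator on a finite-dimensional complex space V₀ commuting with a quaternionic structure J, and λ is a real eigenvalue of φ₀, then the complex dimension of the generalized eigenspace of φ₀ for λ is even. -/
open Module

set_option maxHeartbeats 1000000 in
/-- A finite-dimensional complex vector space admitting a quaternionic structure has
even complex dimension. -/
lemma aux_even_finrank_of_quaternionic (W : Type*) [AddCommGroup W] [Module ℂ W]
    [FiniteDimensional ℂ W] (J : W →ₛₗ[starRingEnd ℂ] W) (hJ : ∀ v, J (J v) = -v) :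
    Even (finrank ℂ W) := by
  let Jr : W →ₗ[ℝ] W :=
    { toFun := fun v => J v
      map_add' := fun a b => map_add J a b
      map_smul' := by
        intro r v
        show J ((r : ℂ) • v) = (r : ℂ) • J v
        rw [J.map_smulₛₗ, Complex.conj_ofReal] }
  let Ir : W →ₗ[ℝ] W :=
    { toFun := fun v => Complex.I • v
      map_add' := fun a b => smul_add _ _ _
      map_smul' := fun r v => smul_comm _ _ _ }
  have hIr : ∀ v : W, Ir v = Complex.I • v := fun v => rfl
  have hJr : ∀ v : W, Jr v = J v := fun v => rfl
  let B : QuaternionAlgebra.Basis (Module.End ℝ W) (-1 : ℝ) (0 : ℝ) (-1 : ℝ) :=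
    { i := Ir
      j := Jr
      k := Ir * Jr
      i_mul_i := by
        refine LinearMap.ext fun v => ?_
        simp only [zero_smul, add_zero, Module.End.mul_apply, LinearMap.smul_apply, Module.End.one_apply, hIr,
          smul_smul, Complex.I_mul_I]
        show (-1 : ℂ) • v = (-1 : ℝ) • v
        rw [neg_one_smul ℂ v]
        exact (neg_one_smul ℝ v).symm
      j_mul_j := by
        refine LinearMap.ext fun v => ?_
        simp only [Module.End.mul_apply, LinearMap.smul_apply, Module.End.one_apply, hJr, hJ]
        exact (neg_one_smul ℝ v).symm
      i_mul_j := rfl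
      j_mul_i := by
        refine LinearMap.ext fun v => ?_
        simp only [zero_smul, zero_sub, Module.End.mul_apply, LinearMap.neg_apply, hIr, hJr]
        rw [J.map_smulₛₗ]
        simp }
  letI : Module (Quaternion ℝ) W := Module.compHom W B.liftHom.toRingHom
  have hsmul : ∀ (q : Quaternion ℝ) (v : W), q • v = B.liftHom q v := fun _ _ => rfl
  haveI : IsScalarTower ℝ (Quaternion ℝ) W := by
    constructor
    intro r q v
    rw [hsmul, hsmul]
    exact congrArg (fun f : Module.End ℝ W => f v) (map_smul B.liftHom r q)
  have h1 : finrank ℝ (Quaternion ℝ) * finrank (Quaternion ℝ) W = finrank ℝ W :=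
    Module.finrank_mul_finrank ℝ (Quaternion ℝ) W
  have h2 : finrank ℝ ℂ * finrank ℂ W = finrank ℝ W :=
    Module.finrank_mul_finrank ℝ ℂ W
  rw [Quaternion.finrank_eq_four] at h1
  rw [Complex.finrank_real_complex] at h2
  exact ⟨finrank (Quaternion ℝ) W, by omega⟩

/-- if `φ₀` commutes with the quaternionic structure `J` and `λ` is a
real eigenvalue of `φ₀`, then the complex dimension of the generalized eigenspace of
`φ₀` for `λ` is even. -/
theorem real_eigenvalue_multiplicity_even (V : Type*) [AddCommGroup V] [Module ℂ V]
    [FiniteDimensional ℂ V] (J : V →ₛₗ[starRingEnd ℂ] V) (hJ : ∀ v, J (J v) = -v)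
    (φ : Module.End ℂ V) (hcomm : ∀ v, φ (J v) = J (φ v))
    (lam : ℝ) (hlam : Module.End.HasEigenvalue φ (lam : ℂ)) :
    Even (finrank ℂ (LinearMap.ker ((φ - (lam : ℂ) • 1) ^ finrank ℂ V))) := by
  clear hlam
  set ψ : Module.End ℂ V := φ - (lam : ℂ) • 1 with hψ
  have hsm : ∀ v : V, J ((lam : ℂ) • v) = (lam : ℂ) • J v := by
    intro v
    rw [J.map_smulₛₗ]
    simp [Complex.conj_ofReal]
  have hstep : ∀ v, ψ (J v) = J (ψ v) := by
    intro v
    show φ (J v) - (lam : ℂ) • J v = J (φ v - (lam : ℂ) • v)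
    rw [map_sub, hcomm, hsm]
  have hpow : ∀ (m : ℕ) v, (ψ ^ m) (J v) = J ((ψ ^ m) v) := by
    intro m
    induction m with
    | zero => intro v; simp
    | succ k ih =>
      intro v
      rw [pow_succ', Module.End.mul_apply, Module.End.mul_apply, ih, hstep]
  set K : Submodule ℂ V := LinearMap.ker (ψ ^ finrank ℂ V) with hK
  have hJmem : ∀ v ∈ K, J v ∈ K := by
    intro v hv
    rw [hK, LinearMap.mem_ker] at hv ⊢
    rw [hpow, hv, map_zero]
  let JK : K →ₛₗ[starRingEnd ℂ] K :=
    { toFun := fun v => ⟨J v, hJmem v v.2⟩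
      map_add' := by intro a b; ext; simp
      map_smul' := fun c v => Subtype.ext (J.map_smulₛₗ c v) }
  have hJK : ∀ v : K, JK (JK v) = -v := by
    intro v
    ext
    show J (J (v : V)) = -(v : V)
    exact hJ v
  exact aux_even_finrank_of_quaternionic K JK hJK
end

section
/- Cayley–Hamilton for quaternionic operators: if φ is an ℍ-linear operator on a finite-dimensional right ℍ-vector space V and p(x) ∈ ℝ[x] is the characteristic polynomial of the induced ℂ-linear operator φ₀ on V₀, then p(φ) = 0 in End_ℍ(V). -/
/-! Real scalars are central in `ℍ`, so `p(φ) v` computed over `ℍ` coincides with `p(φ₀) v` computed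
over `ℂ`, which vanishes by the complex Cayley–Hamilton theorem. -/

open scoped Quaternion
open MulOpposite

theorem Module.End.pow_apply_eq_of_forall_apply_eq {R S M : Type*} [Semiring R] [Semiring S]
    [AddCommMonoid M] [Module R M] [Module S M] {f : Module.End R M} {g : Module.End S M}
    (h : ∀ v, f v = g v) (n : ℕ) (v : M) : (f ^ n) v = (g ^ n) v := by
  rw [Module.End.coe_pow, Module.End.coe_pow, show ⇑f = ⇑g from funext h]

theorem Polynomial.aeval_map_endomorphism {R S M : Type*} [CommSemiring R] [CommSemiring S]
    [AddCommMonoid M] [Module S M] (g : R →+* S) (f : Module.End S M) (p : Polynomial R)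
    (v : M) : Polynomial.aeval f (p.map g) v = p.sum fun n a => g a • (f ^ n) v := by
  rw [Polynomial.aeval_def, Polynomial.eval₂_map, Polynomial.eval₂_eq_sum]
  exact map_sum (LinearMap.applyₗ v) _ _

theorem ofReal_smul_eq_op_smul {V : Type*} [AddCommGroup V] [Module (ℍ[ℝ])ᵐᵒᵖ V] (a : ℝ)
    (v : V) : (a : ℂ) • v = op (a : ℍ[ℝ]) • v :=
  rfl

theorem cayley_hamilton_quaternionic_general (V : Type*) [AddCommGroup V]
    [Module (ℍ[ℝ])ᵐᵒᵖ V] [FiniteDimensional ℂ V]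
    (φ : Module.End (ℍ[ℝ])ᵐᵒᵖ V) (φ₀ : Module.End ℂ V) (hφ : ∀ v, φ₀ v = φ v)
    (p : Polynomial ℝ) (hp : p.map (algebraMap ℝ ℂ) = LinearMap.charpoly φ₀) :
    ∀ v : V, p.sum (fun k a => op ((a : ℍ[ℝ])) • ((φ ^ k) v)) = 0 := by
  intro v
  have h := congr($(LinearMap.aeval_self_charpoly φ₀) v)
  rw [← hp, Polynomial.aeval_map_endomorphism] at h
  simpa only [Module.End.pow_apply_eq_of_forall_apply_eq hφ, Complex.coe_algebraMap,
    ofReal_smul_eq_op_smul, LinearMap.zero_apply] using h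

/-- Cayley–Hamilton over ℍ: if `p ∈ ℝ[x]` is the characteristic
polynomial of the ℂ-linear operator `φ₀` induced on `V₀` by the ℍ-linear operator `φ`,
then `p(φ) = 0` in `End_ℍ(V)`, i.e. `Σₖ (φ^k v)·pₖ = 0` for every `v`. -/
theorem cayley_hamilton_quaternionic (V : Type*) [AddCommGroup V]
    [Module (ℍ[ℝ])ᵐᵒᵖ V] [FiniteDimensional (ℍ[ℝ])ᵐᵒᵖ V] [FiniteDimensional ℂ V]
    (φ : Module.End (ℍ[ℝ])ᵐᵒᵖ V) (φ₀ : Module.End ℂ V) (hφ : ∀ v, φ₀ v = φ v)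
    (p : Polynomial ℝ) (hp : p.map (algebraMap ℝ ℂ) = LinearMap.charpoly φ₀) :
    ∀ v : V, p.sum (fun k a => op ((a : ℍ[ℝ])) • ((φ ^ k) v)) = 0 :=
  cayley_hamilton_quaternionic_general V φ φ₀ hφ p hp
end

section
/- Additive Jordan–Chevalley decomposition over ℍ: every ℍ-linear operator φ on a finite-dimensional right ℍ-vector space V can be written uniquely as φ = φ_s + φ_n with φ_s, φ_n ℍ-linear, φ_s diagonalizable, φ_n nilpotent, and φ_sφ_n = φ_nφ_s; moreover φ_s and φ_n are real polynomials in φ without constant term. -/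
open scoped Quaternion
open MulOpposite

/-- An ℍ-linear operator is diagonalizable (semisimple) if `V` has an ℍ-basis of
eigenvectors. (A right ℍ-space is a module over `ℍᵐᵒᵖ`, with `v·λ = op λ • v`.) -/
def IsDiagonalizableH {V : Type*} [AddCommGroup V] [Module (ℍ[ℝ])ᵐᵒᵖ V]
    (φ : Module.End (ℍ[ℝ])ᵐᵒᵖ V) : Prop :=
  ∃ (m : ℕ) (v : Fin m → V),
    LinearIndependent (ℍ[ℝ])ᵐᵒᵖ v ∧
    Submodule.span (ℍ[ℝ])ᵐᵒᵖ (Set.range v) = ⊤ ∧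
    ∀ i, ∃ lam : ℍ[ℝ], φ (v i) = op lam • v i

/-- `ψ` is a real polynomial in `φ` with the prescribed constant term `c`. -/
def IsRealPolyIn {V : Type*} [AddCommGroup V] [Module (ℍ[ℝ])ᵐᵒᵖ V]
    (ψ φ : Module.End (ℍ[ℝ])ᵐᵒᵖ V) (c : ℝ) : Prop :=
  ∃ f : Polynomial ℝ, f.coeff 0 = c ∧
    ∀ v : V, ψ v = f.sum (fun k a => op ((a : ℍ[ℝ])) • ((φ ^ k) v))


open Polynomial

section

variable {V : Type*} [AddCommGroup V] [Module (ℍ[ℝ])ᵐᵒᵖ V] [Module ℝ V]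
  [IsScalarTower ℝ (ℍ[ℝ])ᵐᵒᵖ V]

lemma op_coe_smul (r : ℝ) (v : V) : op ((r : ℍ[ℝ])) • v = r • v := by
  rw [← algebraMap_smul ((ℍ[ℝ])ᵐᵒᵖ) r v]
  rfl

lemma smul_op_comm (q : ℍ[ℝ]) (r : ℝ) (v : V) : op q • (r • v) = r • (op q • v) := by
  rw [← op_coe_smul r v, ← op_coe_smul r (op q • v), smul_smul, smul_smul, ← op_mul, ← op_mul,
    Quaternion.coe_commutes]

lemma pow_restrict_apply (T : Module.End (ℍ[ℝ])ᵐᵒᵖ V) (k : ℕ) (v : V) :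
    ((LinearMap.restrictScalars ℝ T) ^ k) v = (T ^ k) v := by
  induction k generalizing v with
  | zero => rfl
  | succ k ih =>
    rw [pow_succ, pow_succ, Module.End.mul_apply, Module.End.mul_apply, ih]
    rfl

lemma aeval_apply_eq_sum (T : Module.End (ℍ[ℝ])ᵐᵒᵖ V) (p : ℝ[X]) (v : V) :
    Polynomial.aeval (LinearMap.restrictScalars ℝ T) p v
      = p.sum fun k a => a • ((T ^ k) v) := by
  rw [Polynomial.aeval_def, Polynomial.eval₂_eq_sum, Polynomial.sum, Polynomial.sum,
    LinearMap.sum_apply]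
  refine Finset.sum_congr rfl fun k _ => ?_
  rw [Module.End.mul_apply, Module.algebraMap_end_apply, pow_restrict_apply]

lemma aeval_op_smul (T : Module.End (ℍ[ℝ])ᵐᵒᵖ V) (p : ℝ[X]) (q : ℍ[ℝ]) (v : V) :
    Polynomial.aeval (LinearMap.restrictScalars ℝ T) p (op q • v)
      = op q • Polynomial.aeval (LinearMap.restrictScalars ℝ T) p v := by
  rw [aeval_apply_eq_sum, aeval_apply_eq_sum, Polynomial.sum, Polynomial.sum, Finset.smul_sum]
  refine Finset.sum_congr rfl fun k _ => ?_
  rw [map_smul, smul_op_comm]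

/-- Promotion of a real polynomial applied to `T` to an `ℍᵐᵒᵖ`-linear endomorphism. -/
noncomputable def polyEnd (T : Module.End (ℍ[ℝ])ᵐᵒᵖ V) (p : ℝ[X]) : Module.End (ℍ[ℝ])ᵐᵒᵖ V where
  toFun := Polynomial.aeval (LinearMap.restrictScalars ℝ T) p
  map_add' := map_add _
  map_smul' q v := show (Polynomial.aeval (LinearMap.restrictScalars ℝ T) p) (q • v)
      = q • (Polynomial.aeval (LinearMap.restrictScalars ℝ T) p) v by
    rw [← op_unop q]; exact aeval_op_smul T p q.unop v

@[simp] lemma polyEnd_apply (T : Module.End (ℍ[ℝ])ᵐᵒᵖ V) (p : ℝ[X]) (v : V) :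
    polyEnd T p v = Polynomial.aeval (LinearMap.restrictScalars ℝ T) p v := rfl


lemma end_real_smul (T : Module.End (ℍ[ℝ])ᵐᵒᵖ V) (r : ℝ) (v : V) : T (r • v) = r • T v := by
  rw [← op_coe_smul, map_smul, op_coe_smul]

/-- The set of eigenvectors. -/
def eigSet (T : Module.End (ℍ[ℝ])ᵐᵒᵖ V) : Set V := {w : V | ∃ lam : ℍ[ℝ], T w = op lam • w}

lemma eigen_step {T : Module.End (ℍ[ℝ])ᵐᵒᵖ V} {a β : ℝ} {v u : V} (c : ℍ[ℝ]) (hc : c * c = -1)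
    (hv : T v = a • v + u) (hu : T u = a • u - (β * β) • v) :
    T (β • v - op c • u) = op ((a : ℍ[ℝ]) + β • c) • (β • v - op c • u) := by
  have h1 : op c • (op c • u) = -u := by
    rw [smul_smul, ← op_mul, hc, op_neg, op_one, neg_smul, one_smul]
  rw [map_sub, end_real_smul, map_smul, hv, hu, op_add, add_smul, op_coe_smul, op_smul,
    smul_assoc, smul_sub (op c), smul_op_comm, smul_op_comm, smul_sub, smul_sub, h1]
  rw [smul_op_comm c β v]
  generalize op c • v = A
  generalize op c • u = B
  module

-- quaternion i
noncomputable def qi : ℍ[ℝ] := ⟨0,1,0,0⟩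

lemma qi_mul_qi : qi * qi = -1 := by ext <;> simp only [Quaternion.re_mul, Quaternion.imI_mul, Quaternion.imJ_mul, Quaternion.imK_mul] <;> simp [qi]

lemma eigen_mem_span_of_irred_monic {T : Module.End (ℍ[ℝ])ᵐᵒᵖ V} {q : ℝ[X]}
    (hmon : q.Monic) (hdeg : 1 ≤ q.natDegree) (hdeg2 : q.natDegree ≤ 2)
    (hnoroot : q.natDegree = 2 → ∀ r : ℝ, ¬ q.IsRoot r)
    (v : V) (hv : Polynomial.aeval (LinearMap.restrictScalars ℝ T) q v = 0) :
    v ∈ Submodule.span (ℍ[ℝ])ᵐᵒᵖ (eigSet T) := by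
  interval_cases h : q.natDegree
  · -- degree 1, monic : q = X + C c0
    have hc1 : q.coeff 1 = 1 := by
      have := hmon.coeff_natDegree; rwa [h] at this
    have hexp : Polynomial.aeval (LinearMap.restrictScalars ℝ T) q v
        = q.coeff 0 • v + q.coeff 1 • T v := by
      rw [Polynomial.aeval_eq_sum_range' (n := 2) (by omega) _, LinearMap.sum_apply]
      simp [Finset.sum_range_succ, pow_restrict_apply]
    rw [hexp, hc1, one_smul] at hv
    have hT : T v = op ((-(q.coeff 0) : ℝ) : ℍ[ℝ]) • v := by
      rw [op_coe_smul]
      linear_combination (norm := module) hv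
    exact Submodule.subset_span ⟨_, hT⟩
  · -- degree 2
    have hc2 : q.coeff 2 = 1 := by
      have := hmon.coeff_natDegree; rwa [h] at this
    have hexp : Polynomial.aeval (LinearMap.restrictScalars ℝ T) q v
        = q.coeff 0 • v + q.coeff 1 • T v + q.coeff 2 • T (T v) := by
      rw [Polynomial.aeval_eq_sum_range' (n := 3) (by omega) _, LinearMap.sum_apply]
      simp only [Finset.sum_range_succ, Finset.sum_range_zero, zero_add, LinearMap.smul_apply,
        pow_restrict_apply, pow_zero, pow_one, Module.End.one_apply, pow_two,
        Module.End.mul_apply]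
    rw [hexp, hc2, one_smul] at hv
    set c0 := q.coeff 0 with hc0def
    set c1 := q.coeff 1 with hc1def
    set a : ℝ := -(c1/2) with hadef
    set δ : ℝ := c0 - a^2 with hδdef
    have hδ : 0 < δ := by
      by_contra hcon
      push_neg at hcon
      set s : ℝ := Real.sqrt (-δ) with hsdef
      have hs : s * s = -δ := Real.mul_self_sqrt (by linarith)
      refine hnoroot rfl (a + s) ?_
      have hev : q.eval (a + s) = c0 + c1 * (a + s) + 1 * (a + s)^2 := by
        rw [Polynomial.eval_eq_sum_range' (n := 3) (by omega)]
        simp [Finset.sum_range_succ, hc2, hc0def, hc1def]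
      rw [Polynomial.IsRoot, hev]
      have ha : c1 = -(2*a) := by rw [hadef]; ring
      rw [ha]
      nlinarith [hs]
    set β : ℝ := Real.sqrt δ with hβdef
    have hβ : β * β = δ := Real.mul_self_sqrt hδ.le
    have hβ0 : 0 < β := Real.sqrt_pos.mpr hδ
    set u : V := T v - a • v with hudef
    have hv' : T v = a • v + u := by rw [hudef]; abel
    have hu : T u = a • u - (β * β) • v := by
      rw [hudef, map_sub, end_real_smul, hβ, hδdef, hadef]
      linear_combination (norm := module) hv
    have hw1 : (β • v - op qi • u) ∈ eigSet T := ⟨_, eigen_step qi qi_mul_qi hv' hu⟩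
    have hw2 : (β • v - op (-qi) • u) ∈ eigSet T :=
      ⟨_, eigen_step (-qi) (by rw [neg_mul_neg, qi_mul_qi]) hv' hu⟩
    have hsum : (β • v - op qi • u) + (β • v - op (-qi) • u) = (2*β) • v := by
      rw [op_neg, neg_smul, sub_neg_eq_add]
      generalize op qi • u = A
      match_scalars <;> ring
    have hv2 : v = op (((2*β)⁻¹ : ℝ) : ℍ[ℝ]) • ((β • v - op qi • u) + (β • v - op (-qi) • u)) := by
      rw [hsum, op_coe_smul, smul_smul, inv_mul_cancel₀ (by positivity), one_smul]
    rw [hv2]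
    exact Submodule.smul_mem _ _ (Submodule.add_mem _
      (Submodule.subset_span hw1) (Submodule.subset_span hw2))

lemma eigen_mem_span_of_irred {T : Module.End (ℍ[ℝ])ᵐᵒᵖ V} {q : ℝ[X]} (hq : Irreducible q)
    (v : V) (hv : Polynomial.aeval (LinearMap.restrictScalars ℝ T) q v = 0) :
    v ∈ Submodule.span (ℍ[ℝ])ᵐᵒᵖ (eigSet T) := by
  have hq0 : q ≠ 0 := hq.ne_zero
  have hlc : q.leadingCoeff ≠ 0 := Polynomial.leadingCoeff_ne_zero.mpr hq0
  set q' : ℝ[X] := q * Polynomial.C q.leadingCoeff⁻¹ with hq'def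
  have hmon : q'.Monic := Polynomial.monic_mul_leadingCoeff_inv hq0
  have hdeg : q'.natDegree = q.natDegree := by
    rw [hq'def, Polynomial.natDegree_mul hq0 (by simp [hlc]), Polynomial.natDegree_C, add_zero]
  have hv' : Polynomial.aeval (LinearMap.restrictScalars ℝ T) q' v = 0 := by
    rw [hq'def, map_mul, Module.End.mul_apply, Polynomial.aeval_C, Module.algebraMap_end_apply,
      map_smul, hv, smul_zero]
  refine eigen_mem_span_of_irred_monic hmon ?_ ?_ ?_ v hv'
  · rw [hdeg]; exact hq.natDegree_pos
  · rw [hdeg]; exact hq.natDegree_le_two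
  · intro h2 r hr
    have hroot : q.IsRoot r := by
      have := hr
      rw [hq'def, Polynomial.IsRoot, Polynomial.eval_mul, Polynomial.eval_C] at this
      rcases mul_eq_zero.mp this with h | h
      · exact h
      · exact absurd h (inv_ne_zero hlc)
    obtain ⟨w, hw⟩ := Polynomial.dvd_iff_isRoot.mpr hroot
    rcases hq.isUnit_or_isUnit hw with hu | hu
    · exact Polynomial.not_isUnit_X_sub_C r hu
    · have hw0 : w ≠ 0 := by rintro rfl; rw [mul_zero] at hw; exact hq0 hw
      have : q.natDegree = 1 := by
        rw [hw, Polynomial.natDegree_mul (Polynomial.X_sub_C_ne_zero r) hw0,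
          Polynomial.natDegree_X_sub_C, Polynomial.natDegree_eq_zero_of_isUnit hu]
      rw [hdeg, this] at h2
      omega

lemma eigen_span_eq_top_of_squarefree {T : Module.End (ℍ[ℝ])ᵐᵒᵖ V} :
    ∀ (d : ℕ) (p : ℝ[X]), p.natDegree ≤ d → Squarefree p →
    ∀ v : V, Polynomial.aeval (LinearMap.restrictScalars ℝ T) p v = 0 →
      v ∈ Submodule.span (ℍ[ℝ])ᵐᵒᵖ (eigSet T) := by
  intro d
  induction d with
  | zero =>
    intro p hdeg hsq v hv
    have hp0 : p ≠ 0 := hsq.ne_zero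
    obtain ⟨c, rfl⟩ := Polynomial.natDegree_eq_zero.mp (Nat.le_zero.mp hdeg)
    have hc : c ≠ 0 := fun h => hp0 (by rw [h, map_zero])
    rw [Polynomial.aeval_C, Module.algebraMap_end_apply] at hv
    have : v = 0 := by
      have := congrArg (fun x => c⁻¹ • x) hv
      simpa [smul_smul, inv_mul_cancel₀ hc] using this
    rw [this]
    exact Submodule.zero_mem _
  | succ d ih =>
    intro p hdeg hsq v hv
    by_cases h0 : p.natDegree = 0
    · exact ih p (by omega) hsq v hv
    have hp0 : p ≠ 0 := hsq.ne_zero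
    have hpu : ¬ IsUnit p := Polynomial.not_isUnit_of_natDegree_pos p (by omega)
    obtain ⟨q, hqirr, hqdvd⟩ := WfDvdMonoid.exists_irreducible_factor hpu hp0
    obtain ⟨r, rfl⟩ := hqdvd
    have hq0 : q ≠ 0 := hqirr.ne_zero
    have hr0 : r ≠ 0 := fun h => hp0 (by rw [h, mul_zero])
    have hcop : IsCoprime q r := by
      rw [hqirr.coprime_iff_not_dvd]
      intro hdvd
      exact hqirr.not_isUnit (hsq q (mul_dvd_mul_left q hdvd))
    obtain ⟨A, B, hAB⟩ := hcop
    set Tr := LinearMap.restrictScalars ℝ T with hTr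
    have hv1 : v = Polynomial.aeval Tr (A * q) v + Polynomial.aeval Tr (B * r) v := by
      rw [← LinearMap.add_apply, ← map_add, hAB, map_one, Module.End.one_apply]
    have key1 : Polynomial.aeval Tr q (Polynomial.aeval Tr (B * r) v) = 0 := by
      rw [← Module.End.mul_apply, ← map_mul]
      have : q * (B * r) = B * (q * r) := by ring
      rw [this, map_mul, Module.End.mul_apply, hv, map_zero]
    have key2 : Polynomial.aeval Tr r (Polynomial.aeval Tr (A * q) v) = 0 := by
      rw [← Module.End.mul_apply, ← map_mul]
      have : r * (A * q) = A * (q * r) := by ring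
      rw [this, map_mul, Module.End.mul_apply, hv, map_zero]
    have hdegr : r.natDegree ≤ d := by
      have := Polynomial.natDegree_mul hq0 hr0
      have hq1 := hqirr.natDegree_pos
      omega
    rw [hv1]
    exact Submodule.add_mem _
      (ih r hdegr hsq.of_mul_right _ key2)
      (eigen_mem_span_of_irred hqirr _ key1)

lemma pow_eigen {T : Module.End (ℍ[ℝ])ᵐᵒᵖ V} {w : V} {lam : ℍ[ℝ]}
    (hw : T w = op lam • w) (k : ℕ) : (T ^ k) w = op (lam ^ k) • w := by
  induction k with
  | zero => simp
  | succ k ih =>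
    rw [pow_succ, Module.End.mul_apply, hw, map_smul, ih, smul_smul, ← op_mul, ← pow_succ]

lemma aeval_eigen {T : Module.End (ℍ[ℝ])ᵐᵒᵖ V} {w : V} {lam : ℍ[ℝ]}
    (hw : T w = op lam • w) (p : ℝ[X]) :
    Polynomial.aeval (LinearMap.restrictScalars ℝ T) p w = op (Polynomial.aeval lam p) • w := by
  rw [aeval_apply_eq_sum, Polynomial.aeval_def, Polynomial.eval₂_eq_sum, Polynomial.sum,
    Polynomial.sum, Finset.op_sum, Finset.sum_smul]
  refine Finset.sum_congr rfl fun k _ => ?_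
  rw [pow_eigen hw, ← op_coe_smul, smul_smul, ← op_mul, ← Quaternion.coe_commutes]
  rfl

lemma squarefree_prod_irred_monic (D : Finset ℝ[X])
    (h : ∀ f ∈ D, Irreducible f ∧ f.Monic) : Squarefree (D.prod id) := by
  induction D using Finset.cons_induction with
  | empty => simpa using squarefree_one
  | cons p D hpD ih =>
    rw [Finset.prod_cons]
    obtain ⟨hirr, hmon⟩ := h p (Finset.mem_cons_self p D)
    have hrest : Squarefree (D.prod id) := ih fun f hf => h f (Finset.mem_cons_of_mem hf)
    refine squarefree_mul_iff.mpr ⟨?_, hirr.squarefree, hrest⟩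
    refine IsCoprime.isRelPrime (hirr.coprime_iff_not_dvd.mpr ?_)
    intro hdvd
    obtain ⟨q, hqD, hpq⟩ := (UniqueFactorizationMonoid.irreducible_iff_prime.mp
      hirr).exists_mem_finset_dvd hdvd
    obtain ⟨hqirr, hqmon⟩ := h q (Finset.mem_cons_of_mem hqD)
    have : p = q := Polynomial.eq_of_monic_of_associated hmon hqmon
      (hirr.associated_of_dvd hqirr hpq)
    exact hpD (this ▸ hqD)

lemma diag_of_span [FiniteDimensional (ℍ[ℝ])ᵐᵒᵖ V] {T : Module.End (ℍ[ℝ])ᵐᵒᵖ V}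
    (h : Submodule.span (ℍ[ℝ])ᵐᵒᵖ (eigSet T) = ⊤) : IsDiagonalizableH T := by
  obtain ⟨b, hbsub, hbspan, hbli⟩ := exists_linearIndependent (ℍ[ℝ])ᵐᵒᵖ (eigSet T)
  have hbfin : b.Finite := hbli.setFinite
  letI := hbfin.fintype
  have hrange : Set.range (fun i => (((Fintype.equivFin b).symm i : b) : V)) = b := by
    rw [show (fun i => (((Fintype.equivFin b).symm i : b) : V))
        = (Subtype.val ∘ (Fintype.equivFin b).symm) from rfl,
      (Equiv.surjective _).range_comp, Subtype.range_coe]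
  refine ⟨Fintype.card b, fun i => (((Fintype.equivFin b).symm i : b) : V), ?_, ?_, ?_⟩
  · exact hbli.comp _ (Equiv.injective _)
  · rw [hrange, hbspan, h]
  · intro i
    exact hbsub (Subtype.mem _)

lemma isSemisimple_of_diag {T : Module.End (ℍ[ℝ])ᵐᵒᵖ V}
    (hT : IsDiagonalizableH T) : Module.End.IsSemisimple (LinearMap.restrictScalars ℝ T) := by
  obtain ⟨m, w, hli, hspan, heig⟩ := hT
  choose lam hlam using heig
  set D : Finset ℝ[X] := Finset.image (fun i => minpoly ℝ (lam i)) Finset.univ with hD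
  have hirr : ∀ f ∈ D, Irreducible f ∧ f.Monic := by
    intro f hf
    obtain ⟨i, -, rfl⟩ := Finset.mem_image.mp hf
    exact ⟨minpoly.irreducible (Algebra.IsIntegral.isIntegral _),
      minpoly.monic (Algebra.IsIntegral.isIntegral _)⟩
  have hsq : Squarefree (D.prod id) := squarefree_prod_irred_monic D hirr
  refine Module.End.isSemisimple_of_squarefree_aeval_eq_zero hsq ?_
  apply LinearMap.ext
  intro v
  rw [LinearMap.zero_apply]
  have hv : v ∈ Submodule.span (ℍ[ℝ])ᵐᵒᵖ (Set.range w) := hspan ▸ Submodule.mem_top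
  induction hv using Submodule.span_induction with
  | mem x hx =>
    obtain ⟨i, rfl⟩ := hx
    rw [aeval_eigen (hlam i)]
    have h0 : Polynomial.aeval (lam i) (D.prod id) = 0 := by
      have hmem : minpoly ℝ (lam i) ∈ D := Finset.mem_image.mpr ⟨i, Finset.mem_univ i, rfl⟩
      obtain ⟨c, hc⟩ := Finset.dvd_prod_of_mem id hmem
      simp only [id_eq] at hc
      rw [show D.prod id = ∏ x ∈ D, x from rfl, hc, map_mul, minpoly.aeval, zero_mul]
    rw [h0, op_zero, zero_smul]
  | zero => rw [map_zero]
  | add x y _ _ ihx ihy => rw [map_add, ihx, ihy, add_zero]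
  | smul q x _ ih => rw [← op_unop q, aeval_op_smul, ih, smul_zero]

lemma end_pow_apply_eq {A : Module.End (ℍ[ℝ])ᵐᵒᵖ V} {B : Module.End ℝ V}
    (h : ∀ v, A v = B v) : ∀ (j : ℕ) (v : V), (A ^ j) v = (B ^ j) v := by
  intro j
  induction j with
  | zero => intro v; rfl
  | succ j ih =>
    intro v
    rw [pow_succ, pow_succ, Module.End.mul_apply, Module.End.mul_apply, h, ih]

end

lemma commute_aeval {A : Type*} [Ring A] [Algebra ℝ A] {g x : A} (h : Commute g x)
    (p : Polynomial ℝ) : Commute g (Polynomial.aeval x p) := by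
  induction p using Polynomial.induction_on with
  | C a => rw [Polynomial.aeval_C]; exact Algebra.commute_algebraMap_right a g
  | add p q hp hq => rw [map_add]; exact hp.add_right hq
  | monomial k a hk =>
    rw [pow_succ, ← mul_assoc, map_mul, Polynomial.aeval_X]
    exact hk.mul_right h


/-- additive Jordan–Chevalley decomposition over ℍ: every ℍ-linear
operator `φ` on a finite-dimensional right ℍ-vector space is uniquely `φ = φ_s + φ_n`
with `φ_s` diagonalizable, `φ_n` nilpotent and `φ_sφ_n = φ_nφ_s`; moreover `φ_s` and
`φ_n` are real polynomials in `φ` without constant term. -/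
theorem jordan_chevalley_additive (V : Type*) [AddCommGroup V] [Module (ℍ[ℝ])ᵐᵒᵖ V]
    [FiniteDimensional (ℍ[ℝ])ᵐᵒᵖ V] (φ : Module.End (ℍ[ℝ])ᵐᵒᵖ V) :
    ∃ φs φn : Module.End (ℍ[ℝ])ᵐᵒᵖ V,
      φ = φs + φn ∧ IsDiagonalizableH φs ∧ IsNilpotent φn ∧ φs * φn = φn * φs ∧
      IsRealPolyIn φs φ 0 ∧ IsRealPolyIn φn φ 0 ∧
      ∀ φs' φn' : Module.End (ℍ[ℝ])ᵐᵒᵖ V,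
        φ = φs' + φn' → IsDiagonalizableH φs' → IsNilpotent φn' →
          φs' * φn' = φn' * φs' → φs' = φs ∧ φn' = φn := by
  letI instR : Module ℝ V := Module.compHom V (algebraMap ℝ (ℍ[ℝ])ᵐᵒᵖ)
  haveI instTower : IsScalarTower ℝ (ℍ[ℝ])ᵐᵒᵖ V := ⟨fun r q v => by
    show (r • q) • v = (algebraMap ℝ (ℍ[ℝ])ᵐᵒᵖ r) • (q • v)
    rw [Algebra.smul_def, mul_smul]⟩
  haveI instFin : Module.Finite ℝ V := Module.Finite.trans (ℍ[ℝ])ᵐᵒᵖ V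
  set ψ := LinearMap.restrictScalars ℝ φ with hψdef
  obtain ⟨n, hnmem, s, hsmem, hn, hs, hsum⟩ :=
    Module.End.exists_isNilpotent_isSemisimple (f := ψ)
  rw [Algebra.adjoin_singleton_eq_range_aeval] at hnmem hsmem
  obtain ⟨g₀, hg₀'⟩ := hnmem
  obtain ⟨f₀, hf₀'⟩ := hsmem
  have hg₀ : Polynomial.aeval ψ g₀ = n := hg₀'
  have hf₀ : Polynomial.aeval ψ f₀ = s := hf₀'
  obtain ⟨f, g, hf, hg, hf0, hg0⟩ :
      ∃ f g : Polynomial ℝ, Polynomial.aeval ψ f = s ∧ Polynomial.aeval ψ g = n ∧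
        f.coeff 0 = 0 ∧ g.coeff 0 = 0 := by
    have hmne : minpoly ℝ ψ ≠ 0 := minpoly.ne_zero_of_finite ℝ ψ
    by_cases hm0 : (minpoly ℝ ψ).coeff 0 = 0
    · -- zero constant term of minpoly: constants are automatically zero
      have hXdvd : Polynomial.X ∣ minpoly ℝ ψ := Polynomial.X_dvd_iff.mpr hm0
      have hm1 : minpoly ℝ ψ = Polynomial.X * (minpoly ℝ ψ).divX := by
        conv_lhs => rw [← Polynomial.X_mul_divX_add (minpoly ℝ ψ), hm0, map_zero, add_zero]
      have hdivne : Polynomial.aeval ψ (minpoly ℝ ψ).divX ≠ 0 := by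
        intro hz
        have hdne : (minpoly ℝ ψ).divX ≠ 0 := fun h => hmne (by rw [hm1, h, mul_zero])
        have h1 := Polynomial.degree_le_of_dvd (minpoly.dvd ℝ ψ hz) hdne
        have h2 := Polynomial.degree_divX_lt hmne
        exact absurd (lt_of_le_of_lt h1 h2) (lt_irrefl _)
      obtain ⟨w0, hw0⟩ : ∃ w0 : V, Polynomial.aeval ψ (minpoly ℝ ψ).divX w0 ≠ 0 := by
        by_contra hall
        push_neg at hall
        exact hdivne (LinearMap.ext hall)
      set u : V := Polynomial.aeval ψ (minpoly ℝ ψ).divX w0 with hudef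
      have hu0 : ψ u = 0 := by
        have h3 : ψ * Polynomial.aeval ψ (minpoly ℝ ψ).divX = Polynomial.aeval ψ (minpoly ℝ ψ) := by
          conv_rhs => rw [hm1]
          rw [map_mul, Polynomial.aeval_X]
        calc ψ u = (ψ * Polynomial.aeval ψ (minpoly ℝ ψ).divX) w0 := rfl
        _ = Polynomial.aeval ψ (minpoly ℝ ψ) w0 := by rw [h3]
        _ = 0 := by rw [minpoly.aeval, LinearMap.zero_apply]
      have hnu : n u = g₀.coeff 0 • u := by
        rw [← hg₀]
        conv_lhs => rw [← Polynomial.divX_mul_X_add g₀]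
        rw [map_add, map_mul, Polynomial.aeval_X, Polynomial.aeval_C, LinearMap.add_apply,
          Module.End.mul_apply, hu0, map_zero, zero_add, Module.algebraMap_end_apply]
      have hg₀0 : g₀.coeff 0 = 0 := by
        obtain ⟨j, hj⟩ := hn
        have hpow : ∀ k : ℕ, (n ^ k) u = (g₀.coeff 0) ^ k • u := by
          intro k
          induction k with
          | zero => simp
          | succ k ih =>
            rw [pow_succ, Module.End.mul_apply, hnu, map_smul, ih, smul_smul, pow_succ, mul_comm]
        have hz : (g₀.coeff 0) ^ j • u = 0 := by rw [← hpow, hj, LinearMap.zero_apply]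
        rcases smul_eq_zero.mp hz with h | h
        · rcases j with - | j
          · exfalso
            apply hw0
            have h1 : u = (n ^ 0) u := by simp
            rw [h1, hj, LinearMap.zero_apply]
          · exact pow_eq_zero_iff (Nat.succ_ne_zero j) |>.mp h
        · exact absurd h hw0
      refine ⟨f₀, g₀, hf₀, hg₀, ?_, hg₀0⟩
      have haez : Polynomial.aeval ψ (f₀ + g₀ - Polynomial.X) = 0 := by
        rw [map_sub, map_add, hf₀, hg₀, Polynomial.aeval_X, hsum]
        abel
      have hXdvd2 : Polynomial.X ∣ (f₀ + g₀ - Polynomial.X) :=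
        dvd_trans hXdvd (minpoly.dvd ℝ ψ haez)
      have hc0 := Polynomial.X_dvd_iff.mp hXdvd2
      simp only [Polynomial.coeff_sub, Polynomial.coeff_add, Polynomial.coeff_X_zero,
        sub_zero] at hc0
      rw [hg₀0, add_zero] at hc0
      exact hc0
    · -- nonzero constant term: subtract multiples of the minimal polynomial
      refine ⟨f₀ - Polynomial.C (f₀.coeff 0 / (minpoly ℝ ψ).coeff 0) * minpoly ℝ ψ,
        g₀ - Polynomial.C (g₀.coeff 0 / (minpoly ℝ ψ).coeff 0) * minpoly ℝ ψ, ?_, ?_, ?_, ?_⟩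
      · rw [map_sub, map_mul, minpoly.aeval, mul_zero, sub_zero, hf₀]
      · rw [map_sub, map_mul, minpoly.aeval, mul_zero, sub_zero, hg₀]
      · rw [Polynomial.coeff_sub, Polynomial.mul_coeff_zero, Polynomial.coeff_C_zero]
        field_simp
        ring
      · rw [Polynomial.coeff_sub, Polynomial.mul_coeff_zero, Polynomial.coeff_C_zero]
        field_simp
        ring
  refine ⟨polyEnd φ f, polyEnd φ g, ?_, ?_, ?_, ?_, ⟨f, hf0, fun v => ?_⟩, ⟨g, hg0, fun v => ?_⟩, ?_⟩
  · ext v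
    show φ v = polyEnd φ f v + polyEnd φ g v
    rw [polyEnd_apply, polyEnd_apply, hf, hg]
    show ψ v = s v + n v
    rw [hsum, LinearMap.add_apply, add_comm]
  · -- diagonalizable
    apply diag_of_span
    rw [eq_top_iff]
    rintro v -
    have hres : ∀ w, Polynomial.aeval (LinearMap.restrictScalars ℝ (polyEnd φ f))
        (minpoly ℝ s) w = Polynomial.aeval s (minpoly ℝ s) w := by
      intro w
      have : LinearMap.restrictScalars ℝ (polyEnd φ f) = s := by
        ext w'
        rw [LinearMap.restrictScalars_apply, polyEnd_apply, hf]
      rw [this]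
    refine eigen_span_eq_top_of_squarefree (minpoly ℝ s).natDegree (minpoly ℝ s) le_rfl
      hs.minpoly_squarefree v ?_
    rw [hres, minpoly.aeval, LinearMap.zero_apply]
  · -- nilpotent
    obtain ⟨j, hj⟩ := hn
    refine ⟨j, ?_⟩
    ext v
    have h1 : ∀ w, polyEnd φ g w = n w := fun w => by rw [polyEnd_apply, hg]
    rw [LinearMap.zero_apply, end_pow_apply_eq h1 j v, hj, LinearMap.zero_apply]
  · -- commute
    ext v
    show polyEnd φ f (polyEnd φ g v) = polyEnd φ g (polyEnd φ f v)
    simp only [polyEnd_apply]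
    rw [← Module.End.mul_apply, ← Module.End.mul_apply, ← map_mul, ← map_mul, mul_comm f g]
  · -- real poly φs
    rw [polyEnd_apply, aeval_apply_eq_sum, Polynomial.sum, Polynomial.sum]
    exact Finset.sum_congr rfl fun k _ => (op_coe_smul _ _).symm
  · -- real poly φn
    rw [polyEnd_apply, aeval_apply_eq_sum, Polynomial.sum, Polynomial.sum]
    exact Finset.sum_congr rfl fun k _ => (op_coe_smul _ _).symm
  · -- uniqueness
    intro φs' φn' hsum' hdiag' hnil' hcomm'
    set S' := LinearMap.restrictScalars ℝ φs' with hS'def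
    set N' := LinearMap.restrictScalars ℝ φn' with hN'def
    have hS'ss : Module.End.IsSemisimple S' := isSemisimple_of_diag hdiag'
    have hN'nil : IsNilpotent N' := by
      obtain ⟨j, hj⟩ := hnil'
      refine ⟨j, ?_⟩
      ext v
      rw [LinearMap.zero_apply, ← end_pow_apply_eq (fun _ => rfl) j v, hj, LinearMap.zero_apply]
    have hψ' : ψ = S' + N' := by
      ext v
      show φ v = φs' v + φn' v
      rw [hsum', LinearMap.add_apply]
    have hcomm'' : Commute S' N' := by
      ext v
      show φs' (φn' v) = φn' (φs' v)
      rw [← Module.End.mul_apply, ← Module.End.mul_apply, hcomm']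
    have hcSψ : Commute S' ψ := by rw [hψ']; exact (Commute.refl S').add_right hcomm''
    have hcNψ : Commute N' ψ := by rw [hψ']; exact hcomm''.symm.add_right (Commute.refl N')
    have hcS's : Commute S' s := by rw [← hf]; exact commute_aeval hcSψ f
    have hcN'n : Commute N' n := by rw [← hg]; exact commute_aeval hcNψ g
    have hkey : s - S' = N' - n := by
      have h : n + s = S' + N' := hsum.symm.trans hψ'
      rw [sub_eq_sub_iff_add_eq_add, add_comm s n, h, add_comm]
    have hss2 : Module.End.IsSemisimple (s - S') :=
      Module.End.IsSemisimple.sub_of_commute hcS's.symm hs hS'ss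
    have hnil2 : IsNilpotent (s - S') := by
      rw [hkey]
      exact Commute.isNilpotent_sub hcN'n hN'nil hn
    have h0 : s - S' = 0 := Module.End.eq_zero_of_isNilpotent_isSemisimple hnil2 hss2
    have hSeq : S' = s := by
      have := sub_eq_zero.mp h0
      exact this.symm
    have hNeq : N' = n := sub_eq_zero.mp (by rw [← hkey, h0])
    constructor
    · ext v
      show φs' v = polyEnd φ f v
      rw [polyEnd_apply, hf]
      show S' v = s v
      rw [hSeq]
    · ext v
      show φn' v = polyEnd φ g v
      rw [polyEnd_apply, hg]
      show N' v = n v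
      rw [hNeq]
end
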